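/- Let P, Q be probability distributions on ℝ with everywhere positive continuous densities f_X, f_Y and CDFs F_X, F_Y, and let X ∼ P. Let Q_P^{QT} denote the law of F_Y(X), and let U denote the uniform distribution on [0, 1]. Then TVD(Q_P^{QT}, U) = TVD(P, Q); by symmetry also TVD(P_Q^{QT}, U) = TVD(P, Q), where P_Q^{QT} is the law of F_X(Y) for Y ∼ Q. -/

import Mathlib

/-!
The CDF `F` of a probability measure `Q` with positive density is continuous and strictly
increasing, and it pushes `Q` forward to the uniform distribution `U` on `[0, 1]`. For
probability measures with densities, the total variation distance is the largest discrepancy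
`μ A - ν A` over measurable sets `A`, so it is invariant under a measurable embedding `F`:
`A ↦ F ⁻¹' A` is onto the measurable sets, with right inverse `B ↦ F '' B`. Hence
`TVD (F_* P) U = TVD (F_* P) (F_* Q) = TVD P Q`, and exchanging `P` and `Q` gives the
second identity.
-/

open MeasureTheory Set

/-- The total variation distance between two measures on `ℝ`, computed via their
densities (Radon–Nikodym derivatives) with respect to Lebesgue measure:
`TVD(P,Q) = (1/2) ∫ |p(x) - q(x)| dx`. -/
noncomputable def TVD (μ ν : Measure ℝ) : ℝ :=
  (1 / 2) * ∫ x, |(μ.rnDeriv volume x).toReal - (ν.rnDeriv volume x).toReal|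

open ProbabilityTheory Function

lemma absolutelyContinuous_withDensity_ofReal {α : Type*} [MeasurableSpace α] {μ : Measure α}
    {f : α → ℝ} (hf : AEMeasurable f μ) (hf_pos : ∀ᵐ x ∂μ, 0 < f x) :
    μ ≪ μ.withDensity fun x ↦ ENNReal.ofReal (f x) :=
  withDensity_absolutelyContinuous' hf.ennreal_ofReal
    (hf_pos.mono fun _ hx ↦ (ENNReal.ofReal_pos.2 hx).ne')

lemma TVD_comm (μ ν : Measure ℝ) : TVD μ ν = TVD ν μ := by
  simp only [TVD, abs_sub_comm]

section TotalVariation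

variable {μ ν : Measure ℝ}

noncomputable def densityDiff (μ ν : Measure ℝ) (x : ℝ) : ℝ :=
  (μ.rnDeriv volume x).toReal - (ν.rnDeriv volume x).toReal

lemma integrable_densityDiff [IsFiniteMeasure μ] [IsFiniteMeasure ν] :
    Integrable (densityDiff μ ν) :=
  Measure.integrable_toReal_rnDeriv.sub Measure.integrable_toReal_rnDeriv

lemma measureReal_sub_eq_setIntegral_densityDiff [IsFiniteMeasure μ] [IsFiniteMeasure ν]
    (hμ : μ ≪ volume) (hν : ν ≪ volume) (A : Set ℝ) :
    μ.real A - ν.real A = ∫ x in A, densityDiff μ ν x := by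
  unfold densityDiff
  rw [integral_sub Measure.integrable_toReal_rnDeriv.integrableOn
    Measure.integrable_toReal_rnDeriv.integrableOn, Measure.setIntegral_toReal_rnDeriv hμ,
    Measure.setIntegral_toReal_rnDeriv hν]

variable [IsProbabilityMeasure μ] [IsProbabilityMeasure ν]

lemma TVD_eq_integral_max_densityDiff (hμ : μ ≪ volume) (hν : ν ≪ volume) :
    TVD μ ν = ∫ x, max (densityDiff μ ν x) 0 := by
  have habs : ∀ a : ℝ, |a| = 2 * max a 0 - a := fun a ↦ by
    rcases le_total a 0 with ha | ha <;> simp [ha, abs_of_nonpos, abs_of_nonneg]; ring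
  have hd := integrable_densityDiff (μ := μ) (ν := ν)
  have hd_pos : Integrable fun x ↦ max (densityDiff μ ν x) 0 := hd.sup (integrable_zero _ _ _)
  -- both measures have mass one
  have hd_zero : ∫ x, densityDiff μ ν x = 0 := by
    rw [← setIntegral_univ, ← measureReal_sub_eq_setIntegral_densityDiff hμ hν]; simp
  change 1 / 2 * ∫ x, |densityDiff μ ν x| = _
  simp only [habs]
  rw [integral_sub (hd_pos.const_mul 2) hd, integral_const_mul, hd_zero]
  ring

lemma isGreatest_TVD (hμ : μ ≪ volume) (hν : ν ≪ volume) :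
    IsGreatest ((fun A ↦ μ.real A - ν.real A) '' {A | MeasurableSet A}) (TVD μ ν) := by
  have hd := integrable_densityDiff (μ := μ) (ν := ν)
  have hd_pos : Integrable fun x ↦ max (densityDiff μ ν x) 0 := hd.sup (integrable_zero _ _ _)
  have hS : MeasurableSet {x | 0 < densityDiff μ ν x} :=
    measurableSet_lt measurable_const
      ((Measure.measurable_rnDeriv _ _).ennreal_toReal.sub
        (Measure.measurable_rnDeriv _ _).ennreal_toReal)
  rw [TVD_eq_integral_max_densityDiff hμ hν]
  refine ⟨⟨{x | 0 < densityDiff μ ν x}, hS, ?_⟩, ?_⟩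
  · beta_reduce
    rw [measureReal_sub_eq_setIntegral_densityDiff hμ hν, ← integral_indicator hS]
    congr 1 with x
    by_cases hx : 0 < densityDiff μ ν x
    · simp [hx, hx.le]
    · simp [hx, not_lt.1 hx]
  · rintro _ ⟨A, -, rfl⟩
    calc μ.real A - ν.real A = ∫ x in A, densityDiff μ ν x :=
          measureReal_sub_eq_setIntegral_densityDiff hμ hν A
      _ ≤ ∫ x in A, max (densityDiff μ ν x) 0 :=
          setIntegral_mono hd.integrableOn hd_pos.integrableOn fun x ↦ le_max_left _ _
      _ ≤ ∫ x, max (densityDiff μ ν x) 0 :=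
          setIntegral_le_integral hd_pos (.of_forall fun x ↦ le_max_right _ _)

lemma TVD_map_of_measurableEmbedding {f : ℝ → ℝ} (hf : MeasurableEmbedding f)
    (hμ : μ ≪ volume) (hν : ν ≪ volume) (hμf : μ.map f ≪ volume) (hνf : ν.map f ≪ volume) :
    TVD (μ.map f) (ν.map f) = TVD μ ν := by
  have := Measure.isProbabilityMeasure_map (μ := μ) hf.measurable.aemeasurable
  have := Measure.isProbabilityMeasure_map (μ := ν) hf.measurable.aemeasurable
  have hreal (ρ : Measure ℝ) (A : Set ℝ) : (ρ.map f).real A = ρ.real (f ⁻¹' A) := by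
    simp only [measureReal_def, hf.map_apply]
  have himage : (fun A ↦ (μ.map f).real A - (ν.map f).real A) '' {A | MeasurableSet A} =
      (fun A ↦ μ.real A - ν.real A) '' {A | MeasurableSet A} := by
    ext r
    constructor
    · rintro ⟨A, hA, rfl⟩
      exact ⟨f ⁻¹' A, hf.measurable hA, by simp only [hreal]⟩
    · rintro ⟨B, hB, rfl⟩
      exact ⟨f '' B, hf.measurableSet_image.2 hB,
        by simp only [hreal, preimage_image_eq _ hf.injective]⟩
  exact (isGreatest_TVD hμf hνf).unique (himage ▸ isGreatest_TVD hμ hν)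

end TotalVariation

namespace ProbabilityTheory

variable {μ : Measure ℝ} [IsProbabilityMeasure μ]

lemma continuous_cdf [NullSingletonClass μ] : Continuous (cdf μ) := by
  refine continuous_iff_continuousAt.2 fun x ↦
    (monotone_cdf μ).continuousAt_iff_leftLim_eq_rightLim.2 ?_
  have hjump : ENNReal.ofReal (cdf μ x - leftLim (cdf μ) x) = 0 := by
    rw [← StieltjesFunction.measure_singleton, measure_cdf, measure_singleton]
  rw [StieltjesFunction.rightLim_eq]
  linarith [ENNReal.ofReal_eq_zero.1 hjump, (monotone_cdf μ).leftLim_le (le_refl x)]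

lemma strictMono_cdf (hμ : volume ≪ μ) : StrictMono (cdf μ) := by
  intro x y hxy
  have hpos : μ (Ioc x y) ≠ 0 := fun h ↦
    hxy.not_ge (by simpa [Real.volume_Ioc] using hμ h)
  rw [← measure_cdf (μ := μ), StieltjesFunction.measure_Ioc, ne_eq, ENNReal.ofReal_eq_zero,
    not_le, sub_pos] at hpos
  exact hpos

lemma map_cdf_eq_restrict_Icc [NullSingletonClass μ] (hμ : volume ≪ μ) :
    μ.map (cdf μ) = volume.restrict (Icc 0 1) := by
  have hmono := strictMono_cdf hμ
  have hmeas : Measurable (cdf μ) := hmono.monotone.measurable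
  refine Measure.ext_of_Iic _ _ fun t ↦ ?_
  rw [Measure.map_apply hmeas measurableSet_Iic, Measure.restrict_apply measurableSet_Iic]
  rcases le_or_gt t 0 with ht0 | ht0
  · have hempty : cdf μ ⁻¹' Iic t = ∅ := eq_empty_of_forall_notMem fun x hx ↦
      ((cdf_nonneg μ (x - 1)).trans_lt (hmono (sub_one_lt x))).not_ge (le_trans hx ht0)
    have hnull : Iic t ∩ Icc (0 : ℝ) 1 ⊆ Icc 0 0 := fun x hx ↦ ⟨hx.2.1, hx.1.trans ht0⟩
    rw [hempty, measure_empty, eq_comm]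
    exact measure_mono_null hnull (by simp)
  rcases le_or_gt 1 t with ht1 | ht1
  · have huniv : cdf μ ⁻¹' Iic t = univ := eq_univ_of_forall fun x ↦ (cdf_le_one μ x).trans ht1
    rw [huniv, inter_eq_self_of_subset_right fun x hx ↦ hx.2.trans ht1]
    simp
  · obtain ⟨x₀, rfl⟩ : t ∈ range (cdf μ) := mem_range_of_exists_le_of_exists_ge continuous_cdf
      ((tendsto_cdf_atBot μ).eventually_le_const ht0).exists
      ((tendsto_cdf_atTop μ).eventually_const_le ht1).exists
    have hpre : cdf μ ⁻¹' Iic (cdf μ x₀) = Iic x₀ := ext fun x ↦ hmono.le_iff_le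
    have hinter : Iic (cdf μ x₀) ∩ Icc 0 1 = Icc 0 (cdf μ x₀) :=
      ext fun x ↦ ⟨fun hx ↦ ⟨hx.2.1, hx.1⟩, fun hx ↦ ⟨hx.2, hx.1, hx.2.trans ht1.le⟩⟩
    rw [hpre, hinter, Real.volume_Icc, sub_zero, ofReal_cdf]

end ProbabilityTheory

lemma TVD_map_cdf_restrict_Icc {P Q : Measure ℝ} [IsProbabilityMeasure P]
    [IsProbabilityMeasure Q] (hP : P ≪ volume) (hQ : Q ≪ volume) (hQ_pos : volume ≪ Q) :
    TVD (P.map (cdf Q)) (volume.restrict (Icc 0 1)) = TVD P Q := by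
  have : NullSingletonClass Q := ⟨fun x ↦ hQ (Real.volume_singleton (a := x))⟩
  have hF : MeasurableEmbedding (cdf Q) :=
    continuous_cdf.measurableEmbedding (strictMono_cdf hQ_pos).injective
  have hU := map_cdf_eq_restrict_Icc hQ_pos
  have hU_ac : Q.map (cdf Q) ≪ volume := hU ▸ Measure.restrict_le_self.absolutelyContinuous
  rw [← hU]
  exact TVD_map_of_measurableEmbedding hF hP hQ
    (((hP.trans hQ_pos).map hF.measurable).trans hU_ac) hU_ac

/-- Let `P, Q` have everywhere positive continuous densities `fX, fY` and CDFs `FX, FY`.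
With `Q_P^{QT}` the law of `FY X` for `X ~ P`, `P_Q^{QT}` the law of `FX Y` for `Y ~ Q`,
and `U` the uniform distribution on `[0, 1]`, we have
`TVD(Q_P^{QT}, U) = TVD(P, Q)` and `TVD(P_Q^{QT}, U) = TVD(P, Q)`. -/
theorem qt_induced_tvd_eq
    (P Q : Measure ℝ) [IsProbabilityMeasure P] [IsProbabilityMeasure Q]
    (fX fY : ℝ → ℝ) (hfXpos : ∀ x, 0 < fX x) (hfYpos : ∀ x, 0 < fY x)
    (hfXc : Continuous fX) (hfYc : Continuous fY)
    (hP : P = volume.withDensity (fun x => ENNReal.ofReal (fX x)))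
    (hQ : Q = volume.withDensity (fun x => ENNReal.ofReal (fY x)))
    (FX FY : ℝ → ℝ)
    (hFX : ∀ x, FX x = (P (Iic x)).toReal)
    (hFY : ∀ x, FY x = (Q (Iic x)).toReal) :
    TVD (Measure.map (fun x => FY x) P) (volume.restrict (Icc (0 : ℝ) 1)) = TVD P Q ∧
    TVD (Measure.map (fun y => FX y) Q) (volume.restrict (Icc (0 : ℝ) 1)) = TVD P Q := by
  have hP_ac : P ≪ volume := hP ▸ withDensity_absolutelyContinuous _ _
  have hQ_ac : Q ≪ volume := hQ ▸ withDensity_absolutelyContinuous _ _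
  have hP_pos : volume ≪ P := hP ▸ absolutelyContinuous_withDensity_ofReal
    hfXc.measurable.aemeasurable (.of_forall hfXpos)
  have hQ_pos : volume ≪ Q := hQ ▸ absolutelyContinuous_withDensity_ofReal
    hfYc.measurable.aemeasurable (.of_forall hfYpos)
  have hFX_cdf : (fun y ↦ FX y) = cdf P := funext fun y ↦ by rw [hFX, cdf_eq_real, measureReal_def]
  have hFY_cdf : (fun x ↦ FY x) = cdf Q := funext fun x ↦ by rw [hFY, cdf_eq_real, measureReal_def]
  rw [hFX_cdf, hFY_cdf, TVD_map_cdf_restrict_Icc hP_ac hQ_ac hQ_pos,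
    TVD_map_cdf_restrict_Icc hQ_ac hP_ac hP_pos, TVD_comm]
  exact ⟨rfl, rfl⟩
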